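/- For all reals b₁, b₂, b₃, c > 0, x₁, x₂, x₃, and every real s with s > max(|x₁|, |x₂|, |x₃|) and s > 0, one has ∫₀^∞ e^{−s·t} t^{c−1} Φ₂^{(3)}(b₁, b₂, b₃; c; x₁t, x₂t, x₃t) dt = Γ(c) · s^{−c} · (1 − x₁/s)^{−b₁} (1 − x₂/s)^{−b₂} (1 − x₃/s)^{−b₃}. -/

import Mathlib

open Real MeasureTheory

/-- Rising factorial (Pochhammer symbol) `(a)_k` for a real `a`. -/
noncomputable def risingFactorial (a : ℝ) (k : ℕ) : ℝ :=
  ∏ i ∈ Finset.range k, (a + i)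

/-- The trivariate confluent hypergeometric function `Φ₂⁽³⁾(b₁,b₂,b₃;c;x₁,x₂,x₃)`. -/
noncomputable def Phi2three (b₁ b₂ b₃ c x₁ x₂ x₃ : ℝ) : ℝ :=
  ∑' p : ℕ × ℕ × ℕ,
    risingFactorial b₁ p.1 * risingFactorial b₂ p.2.1 * risingFactorial b₃ p.2.2 /
      (risingFactorial c (p.1 + p.2.1 + p.2.2) * (Nat.factorial p.1 : ℝ) *
        (Nat.factorial p.2.1 : ℝ) * (Nat.factorial p.2.2 : ℝ)) *
      x₁ ^ p.1 * x₂ ^ p.2.1 * x₃ ^ p.2.2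

/-!
Expand `Φ₂⁽³⁾(x₁t, x₂t, x₃t)` as a power series in `t` and integrate term by term against
`e^{-st} t^{c-1}`. The monomial of total degree `N` contributes
`Γ(c + N) s^{-(c+N)} = Γ(c) (c)_N s^{-c} s^{-N}`, and `(c)_N` cancels the denominator of the
coefficient, so the integrated series factors into the three binomial series
`∑ (bᵢ)_n / n! (xᵢ/s)^n = (1 - xᵢ/s)^{-bᵢ}`. Since `s > |xᵢ|` these converge absolutely, which
also justifies exchanging sum and integral.
-/

open Set

section RisingFactorial

theorem risingFactorial_succ (a : ℝ) (n : ℕ) :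
    risingFactorial a (n + 1) = risingFactorial a n * (a + n) :=
  Finset.prod_range_succ _ _

open Polynomial in
theorem risingFactorial_eq_ascPochhammer_eval (a : ℝ) (n : ℕ) :
    risingFactorial a n = (ascPochhammer ℝ n).eval a := by
  induction n with
  | zero => simp [risingFactorial]
  | succ n ih => rw [risingFactorial_succ, ih, ascPochhammer_succ_eval]

theorem risingFactorial_pos {a : ℝ} (ha : 0 < a) (n : ℕ) : 0 < risingFactorial a n :=
  Finset.prod_pos fun _ _ => by positivity

open Polynomial in
theorem Ring.choose_add_sub_one_eq_risingFactorial_div (a : ℝ) (n : ℕ) :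
    Ring.choose (a + n - 1) n = risingFactorial a n / n.factorial := by
  rw [Ring.choose_eq_smul, descPochhammer_smeval_eq_ascPochhammer, ascPochhammer_smeval_eq_eval,
    risingFactorial_eq_ascPochhammer_eval, smul_eq_mul, div_eq_inv_mul]
  ring_nf

theorem Real.Gamma_add_nat_eq_mul_risingFactorial {c : ℝ} (hc : 0 < c) (n : ℕ) :
    Gamma (c + n) = Gamma c * risingFactorial c n := by
  induction n with
  | zero => simp [risingFactorial]
  | succ n ih =>
    rw [Nat.cast_succ, ← add_assoc, Gamma_add_one (by positivity), ih, risingFactorial_succ]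
    ring

end RisingFactorial

section BinomialSeries

noncomputable def binomialTerm (b u : ℝ) (n : ℕ) : ℝ :=
  risingFactorial b n / n.factorial * u ^ n

theorem hasSum_binomialTerm (b : ℝ) {u : ℝ} (hu : |u| < 1) :
    HasSum (binomialTerm b u) ((1 - u) ^ (-b)) := by
  have hu' : u ∈ Metric.eball (0 : ℝ) 1 := by simpa [Metric.mem_eball, ← ofReal_norm] using hu
  have h := (one_div_one_sub_rpow_hasFPowerSeriesOnBall_zero b).hasSum hu'
  simp only [FormalMultilinearSeries.ofScalars_apply_eq,
    Ring.choose_add_sub_one_eq_risingFactorial_div, smul_eq_mul, zero_add, one_div] at h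
  rwa [rpow_neg (by grind)]

theorem summable_norm_binomialTerm (b : ℝ) {u : ℝ} (hu : |u| < 1) :
    Summable fun n => ‖binomialTerm b u n‖ := by
  have hps := one_div_one_sub_rpow_hasFPowerSeriesOnBall_zero b
  have hu' : u ∈ Metric.eball (0 : ℝ) 1 := by simpa [Metric.mem_eball, ← ofReal_norm] using hu
  simpa [binomialTerm, FormalMultilinearSeries.ofScalars_apply_eq,
    Ring.choose_add_sub_one_eq_risingFactorial_div, mul_comm, abs_div] using
    FormalMultilinearSeries.summable_norm_apply _ (Metric.eball_subset_eball hps.r_le hu')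

end BinomialSeries

section TripleProduct

variable {R ι κ μ : Type*} [NormedRing R] {f : ι → R} {g : κ → R} {h : μ → R}

theorem Summable.mul_mul_norm (hf : Summable fun i => ‖f i‖) (hg : Summable fun k => ‖g k‖)
    (hh : Summable fun m => ‖h m‖) :
    Summable fun p : ι × κ × μ => ‖f p.1 * (g p.2.1 * h p.2.2)‖ :=
  hf.mul_norm (g := fun q : κ × μ => g q.1 * h q.2) (hg.mul_norm hh)

theorem HasSum.mul_mul_of_summable_norm [CompleteSpace R] {a b c : R} (hfa : HasSum f a)
    (hgb : HasSum g b) (hhc : HasSum h c) (hf : Summable fun i => ‖f i‖)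
    (hg : Summable fun k => ‖g k‖) (hh : Summable fun m => ‖h m‖) :
    HasSum (fun p : ι × κ × μ => f p.1 * (g p.2.1 * h p.2.2)) (a * (b * c)) :=
  hfa.mul (g := fun q : κ × μ => g q.1 * h q.2) (hgb.mul hhc (hg.mul_norm hh).of_norm)
    (hf.mul_mul_norm hg hh).of_norm

end TripleProduct

theorem integral_exp_neg_mul_rpow_mul_tsum_mul_pow {ι : Type*} [Countable ι] {a : ι → ℝ}
    {n : ι → ℕ} {c s : ℝ} (hc : 0 < c) (hs : 0 < s)
    (hsum : Summable fun i => |a i| * ((1 / s) ^ (c + n i) * Gamma (c + n i))) :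
    ∫ t in Ioi 0, exp (-(s * t)) * t ^ (c - 1) * ∑' i, a i * t ^ n i =
      ∑' i, a i * ((1 / s) ^ (c + n i) * Gamma (c + n i)) := by
  set F : ι → ℝ → ℝ := fun i t => a i * (t ^ (c + n i - 1) * exp (-(s * t)))
  have hpos (i : ι) : 0 < c + n i := by positivity
  have hF_int (i : ι) : Integrable (F i) (volume.restrict (Ioi 0)) := by
    -- a non-integrable function would have integral `0`
    refine Integrable.const_mul (Integrable.of_integral_ne_zero ?_) (a i)
    rw [integral_rpow_mul_exp_neg_mul_Ioi (hpos i) hs]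
    have := hpos i
    positivity
  have hF_norm (i : ι) :
      ∫ t in Ioi 0, ‖F i t‖ = |a i| * ((1 / s) ^ (c + n i) * Gamma (c + n i)) := by
    rw [← integral_rpow_mul_exp_neg_mul_Ioi (hpos i) hs, ← integral_const_mul]
    refine setIntegral_congr_fun measurableSet_Ioi fun t (ht : 0 < t) => ?_
    rw [norm_mul, Real.norm_eq_abs, Real.norm_of_nonneg (by positivity)]
  calc ∫ t in Ioi 0, exp (-(s * t)) * t ^ (c - 1) * ∑' i, a i * t ^ n i
      = ∫ t in Ioi 0, ∑' i, F i t := by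
        refine setIntegral_congr_fun measurableSet_Ioi fun t (ht : 0 < t) => ?_
        rw [← tsum_mul_left]
        refine tsum_congr fun i => ?_
        simp only [F]
        rw [add_sub_right_comm, rpow_add ht, rpow_natCast]
        ring
    _ = ∑' i, ∫ t in Ioi 0, F i t :=
        (integral_tsum_of_summable_integral_norm hF_int (by simpa only [hF_norm] using hsum)).symm
    _ = _ := tsum_congr fun i => by
        rw [integral_const_mul, integral_rpow_mul_exp_neg_mul_Ioi (hpos i) hs]

section Phi2three

noncomputable def phi2threeCoeff (b₁ b₂ b₃ c : ℝ) (p : ℕ × ℕ × ℕ) : ℝ :=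
  risingFactorial b₁ p.1 * risingFactorial b₂ p.2.1 * risingFactorial b₃ p.2.2 /
    (risingFactorial c (p.1 + p.2.1 + p.2.2) * (Nat.factorial p.1 : ℝ) *
      (Nat.factorial p.2.1 : ℝ) * (Nat.factorial p.2.2 : ℝ))

theorem Phi2three_mul_eq_tsum (b₁ b₂ b₃ c x₁ x₂ x₃ t : ℝ) :
    Phi2three b₁ b₂ b₃ c (x₁ * t) (x₂ * t) (x₃ * t) =
      ∑' p : ℕ × ℕ × ℕ, phi2threeCoeff b₁ b₂ b₃ c p * x₁ ^ p.1 * x₂ ^ p.2.1 * x₃ ^ p.2.2 *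
        t ^ (p.1 + p.2.1 + p.2.2) :=
  tsum_congr fun p => by rw [phi2threeCoeff]; ring

theorem phi2threeCoeff_mul_laplace {b₁ b₂ b₃ c s : ℝ} (hc : 0 < c) (hs : 0 < s)
    (x₁ x₂ x₃ : ℝ) (p : ℕ × ℕ × ℕ) :
    phi2threeCoeff b₁ b₂ b₃ c p * x₁ ^ p.1 * x₂ ^ p.2.1 * x₃ ^ p.2.2 *
        ((1 / s) ^ (c + (p.1 + p.2.1 + p.2.2 : ℕ)) * Gamma (c + (p.1 + p.2.1 + p.2.2 : ℕ))) =
      Gamma c * s ^ (-c) * (binomialTerm b₁ (x₁ / s) p.1 *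
        (binomialTerm b₂ (x₂ / s) p.2.1 * binomialTerm b₃ (x₃ / s) p.2.2)) := by
  obtain ⟨i, j, k⟩ := p
  have hrc := (risingFactorial_pos hc (i + j + k)).ne'
  rw [Gamma_add_nat_eq_mul_risingFactorial hc, rpow_add (by positivity), rpow_natCast,
    one_div, inv_rpow hs.le, ← rpow_neg hs.le]
  simp only [phi2threeCoeff, binomialTerm]
  field_simp
  ring

end Phi2three

theorem stmt_8 (b₁ b₂ b₃ c x₁ x₂ x₃ s : ℝ) (hc : 0 < c)
    (hs₁ : max |x₁| (max |x₂| |x₃|) < s) (hs₀ : 0 < s) :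
    ∫ t in Set.Ioi (0 : ℝ),
        Real.exp (-(s * t)) * t ^ (c - 1) * Phi2three b₁ b₂ b₃ c (x₁ * t) (x₂ * t) (x₃ * t) =
      Real.Gamma c * s ^ (-c) * (1 - x₁ / s) ^ (-b₁) * (1 - x₂ / s) ^ (-b₂) *
        (1 - x₃ / s) ^ (-b₃) := by
  have hu {x : ℝ} (hx : |x| < s) : |x / s| < 1 := by
    rwa [abs_div, abs_of_pos hs₀, div_lt_one hs₀]
  obtain ⟨hu₁, hu₂, hu₃⟩ : |x₁ / s| < 1 ∧ |x₂ / s| < 1 ∧ |x₃ / s| < 1 := by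
    simp only [max_lt_iff] at hs₁
    exact ⟨hu hs₁.1, hu hs₁.2.1, hu hs₁.2.2⟩
  have hn₁ := summable_norm_binomialTerm b₁ hu₁
  have hn₂ := summable_norm_binomialTerm b₂ hu₂
  have hn₃ := summable_norm_binomialTerm b₃ hu₃
  have hprod := (hasSum_binomialTerm b₁ hu₁).mul_mul_of_summable_norm
    (hasSum_binomialTerm b₂ hu₂) (hasSum_binomialTerm b₃ hu₃) hn₁ hn₂ hn₃
  simp_rw [Phi2three_mul_eq_tsum]
  rw [integral_exp_neg_mul_rpow_mul_tsum_mul_pow hc hs₀]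
  · rw [tsum_congr (phi2threeCoeff_mul_laplace hc hs₀ x₁ x₂ x₃), tsum_mul_left, hprod.tsum_eq]
    ring
  · refine ((hn₁.mul_mul_norm hn₂ hn₃).mul_left (Gamma c * s ^ (-c))).congr fun p => ?_
    have hX : 0 ≤ (1 / s) ^ (c + (p.1 + p.2.1 + p.2.2 : ℕ)) *
        Gamma (c + (p.1 + p.2.1 + p.2.2 : ℕ)) := by positivity
    rw [← abs_of_nonneg hX, ← abs_mul, phi2threeCoeff_mul_laplace hc hs₀, abs_mul,
      abs_of_pos (by positivity), Real.norm_eq_abs]
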